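/- Let φ : 𝔻 \ N → 𝔻 \ N' be a surjective holomorphic map between complements of Lebesgue-null closed sets, such that the algebraic degree function deg φ (counting preimages) takes values in ℕ* and the total area identity ∫ deg φ · ω = ∫ ω holds for the standard area form ω on 𝔻. Then deg φ ≡ 1 and φ is injective. -/

import Mathlib

/-!
Since `deg φ ≥ 1` and both sides of the area identity are finite, `deg φ = 1` almost everywhere
on `𝔻 \ N'`. Finite fibres rule out local constancy, so by the open mapping theorem `φ` maps
every neighbourhood of a point onto a neighbourhood of its image. Two distinct preimages of one
point would therefore give a whole open set of points with at least two preimages, a set of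
positive measure on which `deg φ ≥ 2`. Hence `φ` is injective, and then `deg φ ≤ 1` everywhere.
-/

open Metric MeasureTheory Topology Filter Set

theorem ae_eq_one_of_one_le_of_integral_eq {α : Type*} [MeasurableSpace α] {μ : Measure α}
    [IsFiniteMeasure μ] {f : α → ℝ} (hf : 1 ≤ᵐ[μ] f) (h : ∫ x, f x ∂μ = ∫ _, 1 ∂μ) :
    f =ᵐ[μ] 1 := by
  by_cases hfi : Integrable f μ
  · exact ((integral_eq_iff_of_ae_le (integrable_const 1) hfi hf).1 h.symm).symm
  · -- the junk value `∫ f = 0` forces `μ = 0`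
    have hμ : μ = 0 := by
      have h0 : μ.real univ = 0 := by simpa [integral_undef hfi, eq_comm (a := (0 : ℝ))] using h
      exact Measure.measure_univ_eq_zero.1 ((measureReal_eq_zero_iff (measure_ne_top μ univ)).1 h0)
    rw [hμ, ae_zero]
    exact eventually_bot

section OpenMapping

variable {E : Type*} [NormedAddCommGroup E] [NormedSpace ℂ E] [Nontrivial E]
  {f : E → ℂ} {S : Set E}

theorem AnalyticAt.nhds_le_map_nhds_of_finite_fiber {z : E} (hf : AnalyticAt ℂ f z)
    (hS : S ∈ 𝓝 z) (hfin : {x ∈ S | f x = f z}.Finite) : 𝓝 (f z) ≤ map f (𝓝 z) := by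
  refine hf.eventually_constant_or_nhds_le_map_nhds.resolve_left fun hconst => ?_
  exact infinite_of_mem_nhds z (inter_mem hS hconst) hfin

theorem AnalyticOnNhd.eventually_fiber_nontrivial (hf : AnalyticOnNhd ℂ f S) (hS : IsOpen S)
    {z₁ z₂ : E} (h₁ : z₁ ∈ S) (h₂ : z₂ ∈ S) (hne : z₁ ≠ z₂) (heq : f z₁ = f z₂)
    (hfin : {x ∈ S | f x = f z₁}.Finite) :
    ∀ᶠ w in 𝓝 (f z₁), {z ∈ S | f z = w}.Nontrivial := by
  obtain ⟨U, hU, V, hV, hUV⟩ := Filter.disjoint_iff.1 (disjoint_nhds_nhds.2 hne)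
  have hUS : f '' (U ∩ S) ∈ 𝓝 (f z₁) :=
    (hf z₁ h₁).nhds_le_map_nhds_of_finite_fiber (hS.mem_nhds h₁) hfin
      (image_mem_map (inter_mem hU (hS.mem_nhds h₁)))
  have hVS : f '' (V ∩ S) ∈ 𝓝 (f z₁) := by
    rw [heq] at hfin ⊢
    exact (hf z₂ h₂).nhds_le_map_nhds_of_finite_fiber (hS.mem_nhds h₂) hfin
      (image_mem_map (inter_mem hV (hS.mem_nhds h₂)))
  filter_upwards [hUS, hVS] with w ⟨x, ⟨hxU, hxS⟩, hx⟩ ⟨y, ⟨hyV, hyS⟩, hy⟩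
  exact ⟨x, ⟨hxS, hx⟩, y, ⟨hyS, hy⟩, hUV.ne_of_mem hxU hyV⟩

theorem AnalyticOnNhd.injOn_of_ae_restrict_subsingleton_fiber {μ : Measure ℂ}
    [μ.IsOpenPosMeasure] {T : Set ℂ} (hf : AnalyticOnNhd ℂ f S) (hS : IsOpen S) (hT : IsOpen T)
    (hmaps : MapsTo f S T) (hfin : ∀ w ∈ T, {z ∈ S | f z = w}.Finite)
    (hae : ∀ᵐ w ∂μ.restrict T, {z ∈ S | f z = w}.Subsingleton) : InjOn f S := by
  intro z₁ h₁ z₂ h₂ heq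
  by_contra hne
  have hpos := μ.measure_pos_of_mem_nhds <| inter_mem (hT.mem_nhds (hmaps h₁))
    (hf.eventually_fiber_nontrivial hS h₁ h₂ hne heq (hfin _ (hmaps h₁)))
  have hnull := ae_iff.1 hae
  rw [Measure.restrict_apply' hT.measurableSet] at hnull
  refine hpos.ne' (measure_mono_null ?_ hnull)
  exact fun w hw => ⟨not_subsingleton_iff.2 hw.2, hw.1⟩

end OpenMapping

theorem degree_one_and_injective_general
    (N N' : Set ℂ)
    (hNcl : IsClosed N) (hN'cl : IsClosed N')
    (φ : ℂ → ℂ) (d : ℂ → ℤ)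
    (hol : DifferentiableOn ℂ φ (ball (0:ℂ) 1 \ N))
    (maps : Set.MapsTo φ (ball (0:ℂ) 1 \ N) (ball (0:ℂ) 1 \ N'))
    (hdeg : ∀ w ∈ ball (0:ℂ) 1 \ N',
      d w = Set.ncard {z ∈ ball (0:ℂ) 1 \ N | φ z = w})
    -- … and takes values in ℕ*
    (hpos : ∀ w ∈ ball (0:ℂ) 1 \ N', 1 ≤ d w)
    -- total area identity ∫ deg φ · ω = ∫ ω
    (harea : (∫ w in ball (0:ℂ) 1 \ N', (d w : ℝ)) = ∫ w in ball (0:ℂ) 1 \ N', (1:ℝ)) :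
    (∀ w ∈ ball (0:ℂ) 1 \ N', d w = 1) ∧ Set.InjOn φ (ball (0:ℂ) 1 \ N) := by
  have hSopen : IsOpen (ball (0:ℂ) 1 \ N) := isOpen_ball.sdiff hNcl
  have hS'open : IsOpen (ball (0:ℂ) 1 \ N') := isOpen_ball.sdiff hN'cl
  -- `ncard` of an infinite set is `0`, so `1 ≤ d` forces finite fibres
  have hfin : ∀ w ∈ ball (0:ℂ) 1 \ N', {z ∈ ball (0:ℂ) 1 \ N | φ z = w}.Finite := fun w hw =>
    finite_of_ncard_pos (by linarith [hdeg w hw, hpos w hw])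
  have : IsFiniteMeasure (volume.restrict (ball (0:ℂ) 1 \ N')) :=
    isFiniteMeasure_restrict.2 ((measure_mono sdiff_subset).trans_lt measure_ball_lt_top).ne
  have hd_ae : (fun w => (d w : ℝ)) =ᵐ[volume.restrict (ball (0:ℂ) 1 \ N')] 1 :=
    ae_eq_one_of_one_le_of_integral_eq (ae_restrict_of_forall_mem hS'open.measurableSet
      fun w hw => by simpa using (Int.cast_le (R := ℝ)).2 (hpos w hw)) harea
  have hinj : InjOn φ (ball (0:ℂ) 1 \ N) := by
    refine (hol.analyticOnNhd hSopen).injOn_of_ae_restrict_subsingleton_fiber (μ := volume)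
      hSopen hS'open maps hfin ?_
    filter_upwards [hd_ae, ae_restrict_mem hS'open.measurableSet] with w hw hwS'
    have hcard : ncard {z ∈ ball (0:ℂ) 1 \ N | φ z = w} = 1 := by simpa [hdeg w hwS'] using hw
    obtain ⟨a, ha⟩ := ncard_eq_one.1 hcard
    exact ha ▸ subsingleton_singleton
  refine ⟨fun w hw => le_antisymm ?_ (hpos w hw), hinj⟩
  rw [hdeg w hw, Nat.cast_le_one, ncard_le_one (hfin w hw)]
  exact fun a ha b hb => hinj ha.1 hb.1 (ha.2.trans hb.2.symm)

theorem degree_one_and_injective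
    (N N' : Set ℂ)
    (hNcl : IsClosed N) (hN'cl : IsClosed N')
    (hNnull : volume N = 0) (hN'null : volume N' = 0)
    (φ : ℂ → ℂ) (d : ℂ → ℤ)
    (hol : DifferentiableOn ℂ φ (ball (0:ℂ) 1 \ N))
    (maps : Set.MapsTo φ (ball (0:ℂ) 1 \ N) (ball (0:ℂ) 1 \ N'))
    (surj : Set.SurjOn φ (ball (0:ℂ) 1 \ N) (ball (0:ℂ) 1 \ N'))
    -- d counts preimages, fibers are finite …
    (hfib : ∀ w ∈ ball (0:ℂ) 1 \ N', {z ∈ ball (0:ℂ) 1 \ N | φ z = w}.Finite)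
    (hdeg : ∀ w ∈ ball (0:ℂ) 1 \ N',
      d w = Set.ncard {z ∈ ball (0:ℂ) 1 \ N | φ z = w})
    -- … and takes values in ℕ*
    (hpos : ∀ w ∈ ball (0:ℂ) 1 \ N', 1 ≤ d w)
    -- total area identity ∫ deg φ · ω = ∫ ω
    (harea : (∫ w in ball (0:ℂ) 1 \ N', (d w : ℝ)) = ∫ w in ball (0:ℂ) 1 \ N', (1:ℝ)) :
    (∀ w ∈ ball (0:ℂ) 1 \ N', d w = 1) ∧ Set.InjOn φ (ball (0:ℂ) 1 \ N) :=
  degree_one_and_injective_general N N' hNcl hN'cl φ d hol maps hdeg hpos harea
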